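/- Under Hypothesis (H) and with the g-family as in the context: for every j ∈ {0,…,m−1}, every x ∈ C_j and every n ∈ ℕ, one has 0 < (λ^{nm}/‖g_j‖_∞) g_j(x) ≤ P^{nm}(x, C_j); and for every Borel set A ⊆ C_j, the continuous function x ↦ P^m(x,A) vanishes at every point of M∖C_j. -/

import Mathlib

/-! For nonnegative continuous `f`, `𝒫ⁿ f (x) = ∫ f dPⁿ(x, ·)`. Hence `𝒫ⁿ f (x) > 0` iff
`Pⁿ(x, {f ≠ 0}) > 0`, and `𝒫ⁿ f (x) ≤ ‖f‖ Pⁿ(x, {f ≠ 0})`. Since `g_j` is an eigenfunction of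
`𝒫^{nm}` with eigenvalue `λ^{nm}`, the second fact is the lower bound, and the first shows that
`P^m(x, C_j) = 0` wherever `g_j(x) = 0`. The bound is strictly positive because `λ > 0`: by
irreducibility the open set `{𝒫ⁿ g_j > 0}` around `x ∈ C_j` is reached from `x` again and again,
so `𝒫ⁿ g_j (x) > 0` for infinitely many `n`, which `λ = 0` would forbid. Finally
`P^m(x, A) = ∫ P^{m-1}(·, A) dP(x, ·)` has an integrand bounded by `1`, so it is continuous in
`x` by (H1). -/

open MeasureTheory Filter Topology

noncomputable section

variable {M : Type*}

/-- The iterated transition kernel: `iterP P 0 x = δ_x` (identity kernel), so that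
`iterP P 1 = P` and `iterP P (n+1) x A = ∫ iterP P n y A ∂(P x)`. -/
def iterP [MeasurableSpace M] (P : M → Measure M) : ℕ → M → Measure M
  | 0 => fun x => Measure.dirac x
  | n + 1 => fun x => (P x).bind (iterP P n)

/-- Hypothesis (H) of the paper: `P` is a measurable sub-Markovian kernel; (H1) each
`P x` is absolutely continuous w.r.t. `ρ` and `x ↦ dP(x,·)/dρ` is continuous into `L¹(ρ)`;
(H2) `ρ(M∖Z) > 0` where `Z = {x | P(x,M) = 0}`, and from every non-escaping point every
nonempty open set is reached with positive probability in some positive time. -/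
structure HypH [MetricSpace M] [MeasurableSpace M] (P : M → Measure M) (ρ : Measure M) : Prop where
  meas : Measurable P
  subMarkov : ∀ x, P x Set.univ ≤ 1
  absCont : ∀ x, P x ≪ ρ
  densityCont : ∀ ε : ℝ, 0 < ε → ∃ δ : ℝ, 0 < δ ∧ ∀ x z : M, dist x z < δ →
      (∫⁻ y, ((P x).rnDeriv ρ y - (P z).rnDeriv ρ y)
        + ((P z).rnDeriv ρ y - (P x).rnDeriv ρ y) ∂ρ) < ENNReal.ofReal ε
  rhoPos : 0 < ρ {x | P x Set.univ ≠ 0}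
  irred : ∀ x, P x Set.univ ≠ 0 → ∀ A : Set M, IsOpen A → A.Nonempty →
      ∃ n : ℕ, 0 < n ∧ 0 < iterP P n x A

def toC [TopologicalSpace M] (f : C(M, ℝ)) : C(M, ℂ) :=
  ⟨fun x => (f x : ℂ), Complex.continuous_ofReal.comp f.continuous⟩

lemma ContinuousLinearMap.pow_apply_of_apply_eq_smul {R V : Type*} [Semiring R]
    [TopologicalSpace V] [AddCommMonoid V] [Module R V] {S : V →L[R] V} {v : V} {c : R}
    (hv : S v = c • v) (n : ℕ) : (S ^ n) v = c ^ n • v := by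
  induction n with
  | zero => simp
  | succ n ih => rw [pow_succ' S, mul_apply_eq_comp, ih, map_smul, hv, smul_smul, ← pow_succ]

section Iterates

variable [MeasurableSpace M] {P : M → Measure M}

lemma measurable_iterP (hP : Measurable P) : ∀ n, Measurable (iterP P n)
  | 0 => Measure.measurable_dirac
  | n + 1 => (Measure.measurable_bind' (measurable_iterP hP n)).comp hP

lemma iterP_succ_apply (hP : Measurable P) (n : ℕ) (x : M) {A : Set M} (hA : MeasurableSet A) :
    iterP P (n + 1) x A = ∫⁻ y, iterP P n y A ∂(P x) :=
  Measure.bind_apply hA (measurable_iterP hP n).aemeasurable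

lemma lintegral_iterP_succ (hP : Measurable P) (n : ℕ) (x : M) {f : M → ENNReal}
    (hf : Measurable f) :
    ∫⁻ y, f y ∂(iterP P (n + 1) x) = ∫⁻ y, ∫⁻ z, f z ∂(iterP P n y) ∂(P x) :=
  Measure.lintegral_bind (measurable_iterP hP n).aemeasurable hf.aemeasurable

lemma iterP_apply_le_one (hP : Measurable P) (hsub : ∀ x, P x Set.univ ≤ 1) (n : ℕ) (x : M)
    (A : Set M) : iterP P n x A ≤ 1 := by
  refine (measure_mono (Set.subset_univ A)).trans ?_
  induction n generalizing x with
  | zero => simp [iterP]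
  | succ n ih =>
    calc iterP P (n + 1) x Set.univ = ∫⁻ y, iterP P n y Set.univ ∂(P x) :=
          iterP_succ_apply hP n x MeasurableSet.univ
      _ ≤ ∫⁻ _, 1 ∂(P x) := lintegral_mono ih
      _ ≤ 1 := by simpa using hsub x

end Iterates

section Koopman

variable [TopologicalSpace M] [CompactSpace M] [MeasurableSpace M]
  {P : M → Measure M} {T : C(M, ℝ) →L[ℝ] C(M, ℝ)}

lemma pow_apply_nonneg (hT : ∀ f x, T f x = ∫ y, f y ∂(P x)) {f : C(M, ℝ)} (hf : 0 ≤ f) (n : ℕ) :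
    0 ≤ (T ^ n) f := by
  induction n with
  | zero => simpa using hf
  | succ n ih =>
    refine ContinuousMap.le_def.2 fun x => ?_
    rw [pow_succ', mul_apply_eq_comp, hT, ContinuousMap.zero_apply]
    exact integral_nonneg fun y => ih y

variable [OpensMeasurableSpace M] [∀ x, IsFiniteMeasure (P x)]

lemma ofReal_pow_apply (hP : Measurable P) (hT : ∀ f x, T f x = ∫ y, f y ∂(P x))
    {f : C(M, ℝ)} (hf : 0 ≤ f) (n : ℕ) (x : M) :
    ENNReal.ofReal ((T ^ n) f x) = ∫⁻ y, ENNReal.ofReal (f y) ∂(iterP P n x) := by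
  induction n generalizing x with
  | zero => simp [iterP, lintegral_dirac' x f.continuous.measurable.ennreal_ofReal]
  | succ n ih =>
    have hint : Integrable ((T ^ n) f) (P x) :=
      (BoundedContinuousFunction.mkOfCompact ((T ^ n) f)).integrable _
    rw [pow_succ', mul_apply_eq_comp, hT,
      ofReal_integral_eq_lintegral_ofReal hint (.of_forall (pow_apply_nonneg hT hf n)),
      lintegral_iterP_succ hP n x f.continuous.measurable.ennreal_ofReal]
    simp only [ih]

lemma pow_apply_pos_iff (hP : Measurable P) (hT : ∀ f x, T f x = ∫ y, f y ∂(P x))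
    {f : C(M, ℝ)} (hf : 0 ≤ f) (n : ℕ) (x : M) :
    0 < (T ^ n) f x ↔ 0 < iterP P n x (Function.support f) := by
  have hsupp : Function.support (fun y => ENNReal.ofReal (f y)) = Function.support f := by
    ext y
    simp only [Function.mem_support, ne_eq, ENNReal.ofReal_eq_zero, not_le]
    exact (hf y).lt_iff_ne'
  rw [← ENNReal.ofReal_pos, ofReal_pow_apply hP hT hf,
    lintegral_pos_iff_support f.continuous.measurable.ennreal_ofReal, hsupp]

lemma ofReal_pow_apply_le_norm_mul (hP : Measurable P) (hT : ∀ f x, T f x = ∫ y, f y ∂(P x))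
    {f : C(M, ℝ)} (hf : 0 ≤ f) (n : ℕ) (x : M) :
    ENNReal.ofReal ((T ^ n) f x) ≤ ENNReal.ofReal ‖f‖ * iterP P n x (Function.support f) := by
  have hle : ∀ y, ENNReal.ofReal (f y) ≤
      (Function.support f).indicator (fun _ => ENNReal.ofReal ‖f‖) y := by
    intro y
    by_cases hy : f y = 0
    · simp [hy]
    · rw [Set.indicator_of_mem hy]
      exact ENNReal.ofReal_le_ofReal ((Real.le_norm_self _).trans (f.norm_coe_le_norm y))
  rw [ofReal_pow_apply hP hT hf]
  calc ∫⁻ y, ENNReal.ofReal (f y) ∂(iterP P n x)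
      ≤ ∫⁻ y, (Function.support f).indicator (fun _ => ENNReal.ofReal ‖f‖) y ∂(iterP P n x) :=
        lintegral_mono hle
    _ = ENNReal.ofReal ‖f‖ * iterP P n x (Function.support f) := by
        rw [lintegral_indicator f.continuous.isOpen_support.measurableSet, setLIntegral_const]

lemma ofReal_div_norm_mul_le_iterP_support (hP : Measurable P) (hT : ∀ f x, T f x = ∫ y, f y ∂(P x))
    {f : C(M, ℝ)} (hf : 0 ≤ f) {n : ℕ} {c : ℝ}
    (hTf : (T ^ n) f = c • f) (x : M) :
    ENNReal.ofReal (c / ‖f‖ * f x) ≤ iterP P n x (Function.support f) := by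
  rcases eq_or_ne f 0 with rfl | hf0
  · simp
  have hnorm : 0 < ‖f‖ := norm_pos_iff.mpr hf0
  rw [div_mul_eq_mul_div, ENNReal.ofReal_div_of_pos hnorm]
  refine ENNReal.div_le_of_le_mul' ?_
  simpa [hTf] using ofReal_pow_apply_le_norm_mul hP hT hf n x

lemma frequently_pow_apply_pos (hP : Measurable P) (hT : ∀ f x, T f x = ∫ y, f y ∂(P x))
    {x : M}
    (hirr : ∀ A : Set M, IsOpen A → A.Nonempty → ∃ n, 0 < n ∧ 0 < iterP P n x A)
    {f : C(M, ℝ)} (hf : 0 ≤ f) (hx : 0 < f x) : ∃ᶠ n in atTop, 0 < (T ^ n) f x := by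
  rw [frequently_atTop]
  intro N
  induction N with
  | zero => exact ⟨0, le_rfl, by simpa using hx⟩
  | succ N ih =>
    obtain ⟨n, hNn, hn⟩ := ih
    -- `{𝒫ⁿ f > 0}` is an open neighbourhood of `x`, reached again at some time `k > 0`.
    obtain ⟨k, hk, hkpos⟩ := hirr _ ((T ^ n) f).continuous.isOpen_support ⟨x, hn.ne'⟩
    refine ⟨k + n, by omega, ?_⟩
    rw [pow_add, mul_apply_eq_comp]
    exact (pow_apply_pos_iff hP hT (pow_apply_nonneg hT hf n) k x).2 hkpos

lemma pos_of_pow_apply_eq_smul (hP : Measurable P) (hT : ∀ f x, T f x = ∫ y, f y ∂(P x))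
    {x : M}
    (hirr : ∀ A : Set M, IsOpen A → A.Nonempty → ∃ n, 0 < n ∧ 0 < iterP P n x A)
    {f : C(M, ℝ)} (hf : 0 ≤ f) (hx : f x ≠ 0) {lam : ℝ} (hlam : 0 ≤ lam) {m : ℕ} (hm : 0 < m)
    (hTf : (T ^ m) f = lam ^ m • f) : 0 < lam := by
  refine hlam.lt_of_ne fun hlam0 => ?_
  have hvanish : ∀ᶠ n in atTop, ¬ 0 < (T ^ n) f x := by
    refine eventually_atTop.2 ⟨m, fun n hn => ?_⟩
    rw [← Nat.sub_add_cancel hn, pow_add, mul_apply_eq_comp, hTf, ← hlam0,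
      zero_pow hm.ne', zero_smul, map_zero]
    exact lt_irrefl 0
  exact not_frequently.2 hvanish (frequently_pow_apply_pos hP hT hirr hf ((hf x).lt_of_ne' hx))

end Koopman

section DensityContinuity

variable [MeasurableSpace M] {P : M → Measure M} {ρ : Measure M}

/-- `(a - b) + (b - a) = |a - b|` in `ℝ≥0∞`, so this is the `L¹(ρ)` distance between the
densities of `P x` and `P z`. -/
def densityDist (P : M → Measure M) (ρ : Measure M) (x z : M) : ENNReal :=
  ∫⁻ y, ((P x).rnDeriv ρ y - (P z).rnDeriv ρ y) + ((P z).rnDeriv ρ y - (P x).rnDeriv ρ y) ∂ρ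

lemma lintegral_le_lintegral_add_densityDist [SigmaFinite ρ] [∀ x, SigmaFinite (P x)]
    (hac : ∀ x, P x ≪ ρ) {h : M → ENNReal} (hh : Measurable h) (hh1 : ∀ y, h y ≤ 1) (u v : M) :
    ∫⁻ y, h y ∂(P u) ≤ ∫⁻ y, h y ∂(P v) + densityDist P ρ u v := by
  have hpt : ∀ y, (P u).rnDeriv ρ y * h y ≤ (P v).rnDeriv ρ y * h y
      + (((P u).rnDeriv ρ y - (P v).rnDeriv ρ y) + ((P v).rnDeriv ρ y - (P u).rnDeriv ρ y)) := by
    intro y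
    calc (P u).rnDeriv ρ y * h y
        ≤ ((P v).rnDeriv ρ y + ((P u).rnDeriv ρ y - (P v).rnDeriv ρ y)) * h y :=
          mul_le_mul_left le_add_tsub _
      _ ≤ (P v).rnDeriv ρ y * h y + ((P u).rnDeriv ρ y - (P v).rnDeriv ρ y) := by
          rw [add_mul]
          exact add_le_add_right (mul_le_of_le_one_right' (hh1 y)) _
      _ ≤ _ := add_le_add_right le_self_add _
  rw [← lintegral_rnDeriv_mul (hac u) hh.aemeasurable,
    ← lintegral_rnDeriv_mul (hac v) hh.aemeasurable, densityDist]
  exact (lintegral_mono hpt).trans_eq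
    (lintegral_add_left ((Measure.measurable_rnDeriv _ _).mul hh) _)

lemma continuous_toReal_lintegral_of_le_one [PseudoMetricSpace M] [SigmaFinite ρ]
    [∀ x, IsFiniteMeasure (P x)] (hac : ∀ x, P x ≪ ρ)
    (hdens : ∀ ε : ℝ, 0 < ε → ∃ δ : ℝ, 0 < δ ∧ ∀ x z : M, dist x z < δ →
      densityDist P ρ x z < ENNReal.ofReal ε)
    {h : M → ENNReal} (hh : Measurable h) (hh1 : ∀ y, h y ≤ 1) :
    Continuous fun x => (∫⁻ y, h y ∂(P x)).toReal := by
  have hfin : ∀ x, ∫⁻ y, h y ∂(P x) ≠ ⊤ := fun x =>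
    ((lintegral_mono hh1).trans_lt (by simp)).ne
  have hdiff : ∀ ε u v, densityDist P ρ u v < ENNReal.ofReal ε →
      (∫⁻ y, h y ∂(P u)).toReal - (∫⁻ y, h y ∂(P v)).toReal < ε := by
    intro ε u v hD
    have hDfin : densityDist P ρ u v ≠ ⊤ := (hD.trans ENNReal.ofReal_lt_top).ne
    have hle := ENNReal.toReal_mono (ENNReal.add_ne_top.2 ⟨hfin v, hDfin⟩)
      (lintegral_le_lintegral_add_densityDist hac hh hh1 u v)
    rw [ENNReal.toReal_add (hfin v) hDfin] at hle
    linarith [ENNReal.toReal_lt_of_lt_ofReal hD]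
  refine Metric.continuous_iff.2 fun x ε hε => ?_
  obtain ⟨δ, hδ, hδε⟩ := hdens ε hε
  refine ⟨δ, hδ, fun z hz => ?_⟩
  rw [Real.dist_eq, abs_sub_lt_iff]
  exact ⟨hdiff ε z x (hδε z x hz), hdiff ε x z (hδε x z (dist_comm x z ▸ hz))⟩

lemma continuous_toReal_iterP_apply [PseudoMetricSpace M] [SigmaFinite ρ]
    [∀ x, IsFiniteMeasure (P x)] (hP : Measurable P) (hsub : ∀ x, P x Set.univ ≤ 1)
    (hac : ∀ x, P x ≪ ρ)
    (hdens : ∀ ε : ℝ, 0 < ε → ∃ δ : ℝ, 0 < δ ∧ ∀ x z : M, dist x z < δ →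
      densityDist P ρ x z < ENNReal.ofReal ε)
    {n : ℕ} (hn : 0 < n) {A : Set M} (hA : MeasurableSet A) :
    Continuous fun x => (iterP P n x A).toReal := by
  obtain ⟨k, rfl⟩ := Nat.exists_eq_add_of_lt hn
  simp only [zero_add, iterP_succ_apply hP k _ hA]
  exact continuous_toReal_lintegral_of_le_one hac hdens
    ((Measure.measurable_coe hA).comp (measurable_iterP hP k))
    fun y => iterP_apply_le_one hP hsub k y A

end DensityContinuity

theorem cyclic_classes_invariant_of_hypH_general
    [MetricSpace M] [CompactSpace M] [MeasurableSpace M] [BorelSpace M]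
    (ρ : Measure M) [IsFiniteMeasure ρ] (P : M → Measure M) (hH : HypH P ρ)
    (T : C(M, ℝ) →L[ℝ] C(M, ℝ)) (hT : ∀ (f : C(M, ℝ)) (x : M), T f x = ∫ y, f y ∂(P x))
    (lam : ℝ) (hlam0 : 0 ≤ lam)
    (m : ℕ)
    (hm1 : 0 < m)
    (g : Fin m → C(M, ℝ)) (hg0 : ∀ (j : Fin m) (x : M), 0 ≤ g j x)
    (hgeig : ∀ j : Fin m, (T ^ m) (g j) = lam ^ m • g j)
    (hgunion : (⋃ j, {x : M | g j x ≠ 0}) = {x : M | P x Set.univ ≠ 0})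
    : (∀ (j : Fin m) (x : M), g j x ≠ 0 → ∀ n : ℕ,
        0 < lam ^ (n * m) / ‖g j‖ * g j x ∧
        ENNReal.ofReal (lam ^ (n * m) / ‖g j‖ * g j x) ≤ iterP P (n * m) x {y | g j y ≠ 0}) ∧
      (∀ (j : Fin m) (A : Set M), A ⊆ {y | g j y ≠ 0} → MeasurableSet A →
        Continuous (fun x => (iterP P m x A).toReal) ∧
        ∀ x : M, g j x = 0 → iterP P m x A = 0) := by
  have hPfin : ∀ x, IsFiniteMeasure (P x) := fun x => ⟨(hH.subMarkov x).trans_lt ENNReal.one_lt_top⟩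
  have hg : ∀ j, 0 ≤ g j := hg0
  refine ⟨fun j x hx n => ⟨?_, ?_⟩, fun j A hA hAm => ⟨?_, fun x hx => ?_⟩⟩
  · have hPx : x ∈ {x : M | P x Set.univ ≠ 0} := hgunion ▸ Set.mem_iUnion.2 ⟨j, hx⟩
    have hlam := pos_of_pow_apply_eq_smul hH.meas hT (hH.irred x hPx) (hg j) hx hlam0 hm1 (hgeig j)
    have hgj : 0 < ‖g j‖ := norm_pos_iff.2 fun h => hx (by simp [h])
    have hgx := (hg0 j x).lt_of_ne' hx
    positivity
  · refine ofReal_div_norm_mul_le_iterP_support hH.meas hT (hg j) ?_ x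
    rw [mul_comm n, pow_mul, pow_mul]
    exact (T ^ m).pow_apply_of_apply_eq_smul (hgeig j) n
  · exact continuous_toReal_iterP_apply hH.meas hH.subMarkov hH.absCont hH.densityCont hm1 hAm
  · refine measure_mono_null hA (by_contra fun hne => ?_)
    have := (pow_apply_pos_iff hH.meas hT (hg j) m x).2 (pos_iff_ne_zero.2 hne)
    simp [hgeig j, hx] at this

/-- **Proposition (cyclic classes are invariant).** Under Hypothesis (H) and with the
`g`-family of eigenfunctions of `𝒫^m` (supports `C_j = {g_j ≠ 0}` partitioning `M∖Z`):
for every `j`, every `x ∈ C_j` and every `n`,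
`0 < (λ^{nm}/‖g_j‖) g_j(x) ≤ P^{nm}(x, C_j)`; and for every Borel `A ⊆ C_j` the
continuous function `x ↦ P^m(x,A)` vanishes at every point of `M∖C_j`. -/
theorem cyclic_classes_invariant_of_hypH
    [MetricSpace M] [CompactSpace M] [MeasurableSpace M] [BorelSpace M]
    (ρ : Measure M) [IsFiniteMeasure ρ] (P : M → Measure M) (hH : HypH P ρ)
    (T : C(M, ℝ) →L[ℝ] C(M, ℝ)) (hT : ∀ (f : C(M, ℝ)) (x : M), T f x = ∫ y, f y ∂(P x))
    (Tc : C(M, ℂ) →L[ℂ] C(M, ℂ)) (hTc : ∀ (f : C(M, ℂ)) (x : M), Tc f x = ∫ y, f y ∂(P x))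
    (lam : ℝ) (hlam0 : 0 ≤ lam) (hlam : spectralRadius ℝ T = ENNReal.ofReal lam)
    (m : ℕ)
    (hm : {z : ℂ | Module.End.HasEigenvalue (Tc : C(M, ℂ) →ₗ[ℂ] C(M, ℂ)) z ∧
        ‖z‖ = lam}.ncard = m)
    (hm1 : 0 < m)
    (g : Fin m → C(M, ℝ)) (hg0 : ∀ (j : Fin m) (x : M), 0 ≤ g j x)
    (hgeig : ∀ j : Fin m, (T ^ m) (g j) = lam ^ m • g j)
    (hgspan : Submodule.span ℂ (Set.range fun j => toC (g j)) =
      Module.End.eigenspace ((Tc ^ m : C(M, ℂ) →L[ℂ] C(M, ℂ)) : C(M, ℂ) →ₗ[ℂ] C(M, ℂ))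
        ((lam : ℂ) ^ m))
    (hgdisj : Pairwise fun i j : Fin m => Disjoint {x : M | g i x ≠ 0} {x : M | g j x ≠ 0})
    (hgunion : (⋃ j, {x : M | g j x ≠ 0}) = {x : M | P x Set.univ ≠ 0})
    : (∀ (j : Fin m) (x : M), g j x ≠ 0 → ∀ n : ℕ,
        0 < lam ^ (n * m) / ‖g j‖ * g j x ∧
        ENNReal.ofReal (lam ^ (n * m) / ‖g j‖ * g j x) ≤ iterP P (n * m) x {y | g j y ≠ 0}) ∧
      (∀ (j : Fin m) (A : Set M), A ⊆ {y | g j y ≠ 0} → MeasurableSet A →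
        Continuous (fun x => (iterP P m x A).toReal) ∧
        ∀ x : M, g j x = 0 → iterP P m x A = 0) :=
  cyclic_classes_invariant_of_hypH_general ρ P hH T hT lam hlam0 m hm1 g hg0 hgeig hgunion
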